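/- Let s ∈ k with s ≠ −1 and s ≠ 0. Let C be the two-dimensional vector space with basis {e, f}, with Δ(e) = e⊗e + (1/(s+1)) f⊗f, Δ(f) = e⊗f + f⊗e, ε(e) = 1, ε(f) = 0. Then (C, Δ, ε) is a coassociative counital coalgebra. -/
import Mathlib


open TensorProduct LinearMap

set_option synthInstance.maxHeartbeats 1000000
set_option maxHeartbeats 2000000

/-- Let `s ∈ k` with `s ≠ −1` and `s ≠ 0`. On the two-dimensional vector
space `C = k × k` with basis `e = (1,0)`, `f = (0,1)`, the maps `Δ`, `ε` determined by
`Δ(e) = e⊗e + (1/(s+1)) f⊗f`, `Δ(f) = e⊗f + f⊗e`, `ε(e) = 1`, `ε(f) = 0` form a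
coassociative counital coalgebra `(C, Δ, ε)`. -/
theorem stmt12 (k : Type*) [Field k] (s : k) (hs0 : s ≠ 0) (hs1 : s + 1 ≠ 0)
    (Δ : (k × k) →ₗ[k] (k × k) ⊗[k] (k × k)) (ε : (k × k) →ₗ[k] k)
    (hΔe : Δ (1, 0) = ((1 : k), (0 : k)) ⊗ₜ[k] ((1 : k), (0 : k))
      + (s + 1)⁻¹ • (((0 : k), (1 : k)) ⊗ₜ[k] ((0 : k), (1 : k))))
    (hΔf : Δ (0, 1) = ((1 : k), (0 : k)) ⊗ₜ[k] ((0 : k), (1 : k))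
      + ((0 : k), (1 : k)) ⊗ₜ[k] ((1 : k), (0 : k)))
    (hεe : ε (1, 0) = 1) (hεf : ε (0, 1) = 0) :
    -- coassociativity: (Δ⊗id)∘Δ = (id⊗Δ)∘Δ (up to the associator)
    (∀ c : k × k, (TensorProduct.assoc k (k × k) (k × k) (k × k))
        (Δ.rTensor (k × k) (Δ c)) = Δ.lTensor (k × k) (Δ c)) ∧
    -- counit laws: (ε⊗id)∘Δ = id = (id⊗ε)∘Δ
    (∀ c : k × k, (TensorProduct.lid k (k × k)) (ε.rTensor (k × k) (Δ c)) = c) ∧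
    (∀ c : k × k, (TensorProduct.rid k (k × k)) (ε.lTensor (k × k) (Δ c)) = c) := by
  have hΔ : ∀ c : k × k, Δ c = c.1 • Δ (1, 0) + c.2 • Δ (0, 1) := by
    intro c
    rw [← map_smul, ← map_smul, ← map_add]
    congr 1
    simp [Prod.ext_iff]
  refine ⟨?_, ?_, ?_⟩
  · intro c
    rw [hΔ c, hΔe, hΔf]
    simp only [map_add, map_smul, LinearEquiv.map_add, LinearEquiv.map_smul, rTensor_tmul, lTensor_tmul, tmul_add, add_tmul,
      smul_tmul', TensorProduct.smul_tmul, assoc_tmul, hΔe, hΔf]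
    simp only [tmul_smul, tmul_add, smul_add, smul_smul]
    module
  · intro c
    rw [hΔ c, hΔe, hΔf]
    simp only [map_add, map_smul, LinearEquiv.map_add, LinearEquiv.map_smul, rTensor_tmul, lid_tmul, hεe, hεf, smul_tmul',
      zero_smul, one_smul, smul_zero, add_zero, zero_add, smul_smul]
    simp [Prod.ext_iff]
  · intro c
    rw [hΔ c, hΔe, hΔf]
    simp only [map_add, map_smul, LinearEquiv.map_add, LinearEquiv.map_smul, lTensor_tmul, rid_tmul, hεe, hεf,
      zero_smul, one_smul, smul_zero, add_zero, zero_add, smul_smul]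
    simp [Prod.ext_iff]
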